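/- Let G be a finite group of order 48 whose Sylow 3-subgroup is normal, and let P be a Sylow 2-subgroup of G. Then there exists an injective group homomorphism from G into P × S₃. -/

import Mathlib

/-!
The normal Sylow 3-subgroup `Q` and the Sylow 2-subgroup `P` have coprime orders multiplying
to 48, so `P` is a complement of `Q` and `G ⧸ Q ≃* P` gives a retraction `G →* P` with kernel
`Q`. Pair it with the action of `G` on the three cosets of `P`, whose kernel is the normal core
of `P`: the kernel of the pair lies in `Q ⊓ P = ⊥`.
-/

open Equiv

theorem Sylow.card_eq_of_card_eq_pow_mul {G : Type*} [Group G] [Finite G] {p k m : ℕ}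
    [hp : Fact p.Prime] (P : Sylow p G) (hG : Nat.card G = p ^ k * m) (hm : ¬p ∣ m) :
    Nat.card P = p ^ k := by
  have hm0 : m ≠ 0 := by rintro rfl; exact hm (dvd_zero p)
  rw [P.card_eq_multiplicity, hG, Nat.factorization_mul (pow_ne_zero _ hp.out.ne_zero) hm0,
    Finsupp.add_apply, hp.out.factorization_pow, Finsupp.single_eq_same,
    Nat.factorization_eq_zero_of_not_dvd hm, add_zero]

namespace Subgroup

variable {G : Type*} [Group G]

theorem injective_prod_toPermHom_of_disjoint {M : Type*} [Monoid M] {H : Subgroup G}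
    (π : G →* M) (h : Disjoint π.ker H) :
    Function.Injective (π.prod (MulAction.toPermHom G (G ⧸ H))) := by
  rw [← MonoidHom.ker_eq_bot_iff, MonoidHom.ker_prod, ← normalCore_eq_ker]
  exact (h.mono_right (normalCore_le H)).eq_bot

theorem IsComplement'.exists_injective_prod_perm {H N : Subgroup G} [N.Normal] [H.FiniteIndex]
    (h : H.IsComplement' N) {n : ℕ} (hn : H.index = n) :
    ∃ f : G →* H × Perm (Fin n), Function.Injective f := by
  let retraction : G →* H := (h.QuotientMulEquiv : G ⧸ N →* H).comp (QuotientGroup.mk' N)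
  have hker : retraction.ker = N := by
    rw [MonoidHom.ker_mulEquiv_comp, QuotientGroup.ker_mk']
  let e : G ⧸ H ≃ Fin n := Finite.equivFinOfCardEq hn
  refine ⟨((MonoidHom.id H).prodMap e.permCongrHom.toMonoidHom).comp
    (retraction.prod (MulAction.toPermHom G (G ⧸ H))), ?_⟩
  exact (Function.injective_id.prodMap e.permCongrHom.injective).comp
    (injective_prod_toPermHom_of_disjoint retraction (hker ▸ h.disjoint.symm))

end Subgroup

/-- A group of order 48 with a normal Sylow 3-subgroup embeds into `P × S₃`,
where `P` is a Sylow 2-subgroup. -/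
theorem order48_embeds_sylow2_prod_S3 (G : Type) [Group G] (hG : Nat.card G = 48)
    (Q : Sylow 3 G) (hQ : (Q : Subgroup G).Normal) (P : Sylow 2 G) :
    ∃ f : G →* (↥(P : Subgroup G) × Equiv.Perm (Fin 3)), Function.Injective f := by
  have : Finite G := Nat.finite_of_card_ne_zero (by omega)
  have hPcard : Nat.card P = 16 :=
    P.card_eq_of_card_eq_pow_mul (k := 4) (m := 3) hG (by norm_num)
  have hQcard : Nat.card Q = 3 := by
    simpa using Q.card_eq_of_card_eq_pow_mul (k := 1) (m := 16) hG (by norm_num)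
  have hcompl : (P : Subgroup G).IsComplement' Q :=
    Subgroup.isComplement'_of_coprime (by rw [hPcard, hQcard, hG])
      (by rw [hPcard, hQcard]; norm_num)
  exact hcompl.exists_injective_prod_perm (hcompl.symm.index_eq_card.trans hQcard)
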